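/- arXiv:1803.08520 — 7 statements merged into one kernel-verified Lean document; each statement's English description precedes it below -/
import Mathlib

section
/- Let F be a field, let ∅ ≠ O ⊆ F \ {0,1}, and let f be an O-preserving permutation of F ∪ {∞}. Then for every triple of distinct elements a,b,c ∈ F ∪ {∞} there exists a permutation α of O such that for every x ∈ O, f(g_x(a,b,c)) = g_{α(x)}(f(a),f(b),f(c)), where g_x(a,b,c) is the unique point d ∉ {a,b,c} with [a,b;c,d] = x. -/
open scoped Classical

/-- The cross-ratio `[a,b;c,d]` on the projective line `F ∪ {∞}` (modelled as
`Option F`, with `none` playing the role of `∞`), with the usual conventions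
at `∞`; junk value `0` when two or more of the arguments are `∞`. -/
noncomputable def crossRatio {F : Type*} [Field F] :
    Option F → Option F → Option F → Option F → F
  | none,   some b, some c, some d => (d - b) / (c - b)
  | some a, none,   some c, some d => (c - a) / (d - a)
  | some a, some b, none,   some d => (d - b) / (d - a)
  | some a, some b, some c, none   => (c - a) / (c - b)
  | some a, some b, some c, some d => ((c - a) / (c - b)) * ((d - b) / (d - a))
  | _, _, _, _ => 0

/-- A permutation `f` of the projective line is `O`-preserving if for all
quadruples of distinct points, `[a,b;c,d] ∈ O ↔ [f a, f b; f c, f d] ∈ O`. -/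
def OPreserving {F : Type*} [Field F] (O : Set F) (f : Equiv.Perm (Option F)) : Prop :=
  ∀ a b c d : Option F, a ≠ b → a ≠ c → a ≠ d → b ≠ c → b ≠ d → c ≠ d →
    (crossRatio a b c d ∈ O ↔ crossRatio (f a) (f b) (f c) (f d) ∈ O)

/-!
For distinct `a, b, c`, the map `d ↦ [a,b;c,d]` is a bijection from the complement of
`{a, b, c}` onto `F \ {0,1}`, with an explicit fractional-linear inverse `x ↦ g_x(a,b,c)`.
As `O` avoids `0` and `1`, it restricts to a bijection from `{d | [a,b;c,d] ∈ O}` onto `O`,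
and an `O`-preserving `f` maps `{d | [a,b;c,d] ∈ O}` onto `{e | [f a, f b; f c, e] ∈ O}`.
So `α` is the composite `O → {d | [a,b;c,d] ∈ O} → {e | [f a, f b; f c, e] ∈ O} → O`.
-/

section

variable {F : Type*} [Field F]

lemma ne_of_crossRatio_ne_zero_one {a b c d : Option F} (h0 : crossRatio a b c d ≠ 0)
    (h1 : crossRatio a b c d ≠ 1) : d ≠ a ∧ d ≠ b ∧ d ≠ c := by
  refine ⟨?_, ?_, ?_⟩ <;> rintro rfl
  · rcases b with _ | b <;> rcases c with _ | c <;> rcases d with _ | d <;>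
      simp [crossRatio] at h0
  · rcases a with _ | a <;> rcases c with _ | c <;> rcases d with _ | d <;>
      simp [crossRatio] at h0
  · rcases a with _ | a <;> rcases b with _ | b <;> rcases d with _ | d <;>
      simp [crossRatio] at h0 h1 <;> grind

/-- The paper's `g_x(a,b,c)`, i.e. the solution `d` of `[a,b;c,d] = x`; for finite `a, b, c`
it is `∞` exactly when `x = [a,b;c,∞]`. -/
noncomputable def fourthPoint : Option F → Option F → Option F → F → Option F
  | none,   some b, some c, x => some (b + x * (c - b))
  | some a, none,   some c, x => some (a + (c - a) / x)
  | some a, some b, none,   x => some (a + (a - b) / (x - 1))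
  | some a, some b, some c, x =>
      let k := (c - a) / (c - b)
      if x = k then none else some ((x * a - k * b) / (x - k))
  | _, _, _, _ => none

lemma crossRatio_fourthPoint {a b c : Option F} (hab : a ≠ b) (hac : a ≠ c) (hbc : b ≠ c)
    {x : F} (hx0 : x ≠ 0) (hx1 : x ≠ 1) : crossRatio a b c (fourthPoint a b c x) = x := by
  match a, b, c with
  | none, some b, some c =>
    have : c - b ≠ 0 := sub_ne_zero.mpr (by simpa [eq_comm] using hbc)
    simp only [fourthPoint, crossRatio, add_sub_cancel_left]
    field_simp
  | some a, none, some c =>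
    have : c - a ≠ 0 := sub_ne_zero.mpr (by simpa [eq_comm] using hac)
    simp only [fourthPoint, crossRatio, add_sub_cancel_left]
    field_simp
  | some a, some b, none =>
    have : a - b ≠ 0 := sub_ne_zero.mpr (by simpa using hab)
    have : x - 1 ≠ 0 := sub_ne_zero.mpr hx1
    simp only [fourthPoint, crossRatio, add_sub_cancel_left]
    field_simp
    ring
  | some a, some b, some c =>
    have hab' : a - b ≠ 0 := sub_ne_zero.mpr (by simpa using hab)
    have hca : c - a ≠ 0 := sub_ne_zero.mpr (by simpa [eq_comm] using hac)
    have hcb : c - b ≠ 0 := sub_ne_zero.mpr (by simpa [eq_comm] using hbc)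
    simp only [fourthPoint]
    split_ifs with hk
    · exact hk.symm
    · simp only [crossRatio]
      set k := (c - a) / (c - b)
      have hxk : x - k ≠ 0 := sub_ne_zero.mpr hk
      have hk0 : k ≠ 0 := div_ne_zero hca hcb
      have hda : (x * a - k * b) / (x - k) - a = k * (a - b) / (x - k) := by
        field_simp; ring
      have hdb : (x * a - k * b) / (x - k) - b = x * (a - b) / (x - k) := by
        field_simp; ring
      rw [hda, hdb]
      field_simp

lemma fourthPoint_crossRatio {a b c d : Option F} (hab : a ≠ b) (hac : a ≠ c) (hbc : b ≠ c)
    (hda : d ≠ a) (hdb : d ≠ b) (hdc : d ≠ c) : fourthPoint a b c (crossRatio a b c d) = d := by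
  match a, b, c, d with
  | none, some b, some c, some d =>
    have : c - b ≠ 0 := sub_ne_zero.mpr (by simpa [eq_comm] using hbc)
    simp only [fourthPoint, crossRatio, Option.some.injEq]
    field_simp
    ring
  | some a, none, some c, some d =>
    have : c - a ≠ 0 := sub_ne_zero.mpr (by simpa [eq_comm] using hac)
    have : d - a ≠ 0 := sub_ne_zero.mpr (by simpa using hda)
    simp only [fourthPoint, crossRatio, Option.some.injEq]
    field_simp
    ring
  | some a, some b, none, some d =>
    have hab' : a - b ≠ 0 := sub_ne_zero.mpr (by simpa using hab)
    have hda' : d - a ≠ 0 := sub_ne_zero.mpr (by simpa using hda)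
    simp only [fourthPoint, crossRatio, Option.some.injEq]
    rw [div_sub_one hda', sub_sub_sub_cancel_left, div_div_cancel₀ hab', add_sub_cancel]
  | some a, some b, some c, none =>
    simp [fourthPoint, crossRatio]
  | some a, some b, some c, some d =>
    have hab' : a - b ≠ 0 := sub_ne_zero.mpr (by simpa using hab)
    have hca : c - a ≠ 0 := sub_ne_zero.mpr (by simpa [eq_comm] using hac)
    have hcb : c - b ≠ 0 := sub_ne_zero.mpr (by simpa [eq_comm] using hbc)
    have hda' : d - a ≠ 0 := sub_ne_zero.mpr (by simpa using hda)
    have hk : (c - a) / (c - b) ≠ 0 := div_ne_zero hca hcb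
    have hr : (d - b) / (d - a) - 1 = (a - b) / (d - a) := by
      rw [div_sub_one hda', sub_sub_sub_cancel_left]
    have hr1 : (d - b) / (d - a) ≠ 1 := by
      intro h
      rw [h, sub_self] at hr
      exact div_ne_zero hab' hda' hr.symm
    simp only [fourthPoint]
    split_ifs with h
    · exact absurd (mul_left_cancel₀ hk (h.trans (mul_one _).symm)) hr1
    · simp only [crossRatio, Option.some.injEq]
      rw [← mul_sub_one, hr]
      field_simp
      ring

lemma ne_of_crossRatio_mem {O : Set F} (hO : ∀ x ∈ O, x ≠ 0 ∧ x ≠ 1) {a b c d : Option F}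
    (h : crossRatio a b c d ∈ O) :
    d ≠ a ∧ d ≠ b ∧ d ≠ c :=
  ne_of_crossRatio_ne_zero_one (hO _ h).1 (hO _ h).2

lemma OPreserving.crossRatio_mem_iff {O : Set F} (hO : ∀ x ∈ O, x ≠ 0 ∧ x ≠ 1)
    {f : Equiv.Perm (Option F)} (hf : OPreserving O f)
    {a b c : Option F} (hab : a ≠ b) (hac : a ≠ c) (hbc : b ≠ c) (d : Option F) :
    crossRatio a b c d ∈ O ↔ crossRatio (f a) (f b) (f c) (f d) ∈ O := by
  refine ⟨fun h ↦ ?_, fun h ↦ ?_⟩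
  · obtain ⟨hda, hdb, hdc⟩ := ne_of_crossRatio_mem hO h
    exact (hf a b c d hab hac hda.symm hbc hdb.symm hdc.symm).mp h
  · obtain ⟨hda, hdb, hdc⟩ := ne_of_crossRatio_mem hO h
    exact (hf a b c d hab hac (ne_of_apply_ne f hda).symm hbc (ne_of_apply_ne f hdb).symm
      (ne_of_apply_ne f hdc).symm).mpr h

noncomputable def crossRatioEquiv {O : Set F} (hO : ∀ x ∈ O, x ≠ 0 ∧ x ≠ 1)
    {a b c : Option F} (hab : a ≠ b) (hac : a ≠ c) (hbc : b ≠ c) :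
    crossRatio a b c ⁻¹' O ≃ O where
  toFun d := ⟨crossRatio a b c d, d.2⟩
  invFun x := ⟨fourthPoint a b c x, by
    rw [Set.mem_preimage, crossRatio_fourthPoint hab hac hbc (hO x x.2).1 (hO x x.2).2]
    exact x.2⟩
  left_inv d := by
    obtain ⟨hda, hdb, hdc⟩ := ne_of_crossRatio_mem hO d.2
    exact Subtype.ext (fourthPoint_crossRatio hab hac hbc hda hdb hdc)
  right_inv x := Subtype.ext (crossRatio_fourthPoint hab hac hbc (hO x x.2).1 (hO x x.2).2)

end

theorem ex_perm_of_O_preserving_general {F : Type*} [Field F] (O : Set F)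
    (hO : ∀ x ∈ O, x ≠ 0 ∧ x ≠ 1)
    (f : Equiv.Perm (Option F)) (hf : OPreserving O f) :
    ∀ a b c : Option F, a ≠ b → a ≠ c → b ≠ c →
      ∃ α : {x // x ∈ O} ≃ {x // x ∈ O},
        ∀ (x : F) (hx : x ∈ O) (d : Option F),
          d ≠ a → d ≠ b → d ≠ c → crossRatio a b c d = x →
            f d ≠ f a ∧ f d ≠ f b ∧ f d ≠ f c ∧
              crossRatio (f a) (f b) (f c) (f d) = (α ⟨x, hx⟩ : F) := by
  intro a b c hab hac hbc
  let e := crossRatioEquiv hO hab hac hbc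
  let e' := crossRatioEquiv hO (f.injective.ne hab) (f.injective.ne hac) (f.injective.ne hbc)
  refine ⟨e.symm.trans ((f.subtypeEquiv (hf.crossRatio_mem_iff hO hab hac hbc)).trans e'), ?_⟩
  rintro x hx d hda hdb hdc rfl
  refine ⟨f.injective.ne hda, f.injective.ne hdb, f.injective.ne hdc, ?_⟩
  have hd : e.symm ⟨_, hx⟩ = ⟨d, hx⟩ := e.symm_apply_eq.mpr rfl
  simp only [Equiv.trans_apply, hd]
  rfl

/-- If `f` is an `O`-preserving permutation of `F ∪ {∞}` (`O` a nonempty subset of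
`F \ {0,1}`), then for every triple of distinct points `a,b,c` there is a
permutation `α` of `O` such that `f (g_x (a,b,c)) = g_{α x} (f a, f b, f c)` for all
`x ∈ O`; here `g_x (a,b,c)` is characterized as the unique point `d ∉ {a,b,c}` with
`[a,b;c,d] = x`. -/
theorem ex_perm_of_O_preserving {F : Type*} [Field F] (O : Set F) (hne : O.Nonempty)
    (hO : ∀ x ∈ O, x ≠ 0 ∧ x ≠ 1)
    (f : Equiv.Perm (Option F)) (hf : OPreserving O f) :
    ∀ a b c : Option F, a ≠ b → a ≠ c → b ≠ c →
      ∃ α : {x // x ∈ O} ≃ {x // x ∈ O},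
        ∀ (x : F) (hx : x ∈ O) (d : Option F),
          d ≠ a → d ≠ b → d ≠ c → crossRatio a b c d = x →
            f d ≠ f a ∧ f d ≠ f b ∧ f d ≠ f c ∧
              crossRatio (f a) (f b) (f c) (f d) = (α ⟨x, hx⟩ : F) :=
  ex_perm_of_O_preserving_general O hO f hf
end

section
/- Assume the Hypothesis. For all a ≠ b in F there exist permutations τ_{a,b}, ρ_{a,b}, χ_{a,b} of O, and whenever additionally a,b ≠ 1, permutations α_{a,b}, β_{a,b} of O, such that for every x ∈ O: f(ax + b(1−x)) = f(a)τ_{a,b}(x) + f(b)(1−τ_{a,b}(x)); f((a − (1−x)b)/x) = (f(a) − (1−ρ_{a,b}(x))f(b))/ρ_{a,b}(x); f((a − xb)/(1−x)) = (f(a) − χ_{a,b}(x)f(b))/(1−χ_{a,b}(x)); f((abx − bx − ab + a)/(ax − x − b + 1)) = (f(a)f(b)α_{a,b}(x) − f(b)α_{a,b}(x) − f(a)f(b) + f(a))/(f(a)α_{a,b}(x) − α_{a,b}(x) − f(b) + 1); and f((a − b − abx + bx)/(a − b − ax + x)) = (f(a) − f(b) − f(a)f(b)β_{a,b}(x) +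 f(b)β_{a,b}(x))/(f(a) − f(b) − f(a)β_{a,b}(x) + β_{a,b}(x)). -/
open scoped Classical

/-- The map `F → F` induced by a permutation of `F ∪ {∞}` fixing `∞`
(junk value `0` if `f` maps a finite point to `∞`). -/
noncomputable def fmap {F : Type*} [Field F] (f : Equiv.Perm (Option F)) (a : F) : F :=
  (f (some a)).getD 0

/-- Division with values in the projective line: `p / q`, read as `∞` when `q = 0`. -/
noncomputable def fdiv {F : Type*} [Field F] (p q : F) : Option F :=
  if q = 0 then none else some (p / q)

/-!
Each of the five points is the unique point `P` of the projective line with `[A, B; C, P] = x`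
for a suitable triple `A, B, C` of distinct points among `∞, a, b, 1`, because the cross-ratio
is injective in its last argument away from `A, B, C`. As `f` fixes `∞` and `1` and preserves
membership of cross-ratios in `O`, `x ↦ [f A, f B; f C, f P]` maps `O` into `O`; the same
construction for `f⁻¹` inverts it.
-/

section

variable {F : Type*} [Field F]

-- For `P = A` or `P = B` the value is the junk `0` of a division by zero.
theorem crossRatio_eq_zero_or_eq_one_of_mem {A B C P : Option F} (hAC : A ≠ C) (hBC : B ≠ C)
    (hP : P ∈ ({A, B, C} : Set (Option F))) : crossRatio A B C P = 0 ∨ crossRatio A B C P = 1 := by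
  obtain h | h | h := hP <;> rw [h] <;>
  rcases A with _ | a <;> rcases B with _ | b <;> rcases C with _ | c <;>
  simp_all [crossRatio, sub_ne_zero, Ne.symm]

theorem crossRatio_injOn {A B C : Option F} (hAB : A ≠ B) (hAC : A ≠ C) (hBC : B ≠ C) :
    Set.InjOn (crossRatio A B C) {A, B, C}ᶜ := by
  intro P hP Q hQ h
  simp only [Set.mem_compl_iff, Set.mem_insert_iff, Set.mem_singleton_iff, not_or] at hP hQ
  rcases A with _ | a <;> rcases B with _ | b <;> rcases C with _ | c <;>
  rcases P with _ | p <;> rcases Q with _ | q <;> simp_all [crossRatio]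
  all_goals grind

theorem notMem_of_crossRatio_mem {O : Set F} (hO : ∀ x ∈ O, x ≠ 0 ∧ x ≠ 1)
    {A B C P : Option F} (hAC : A ≠ C) (hBC : B ≠ C) (h : crossRatio A B C P ∈ O) :
    P ∉ ({A, B, C} : Set (Option F)) := fun hP =>
  (crossRatio_eq_zero_or_eq_one_of_mem hAC hBC hP).elim (hO _ h).1 (hO _ h).2

theorem apply_some_eq_some_fmap {f : Equiv.Perm (Option F)} (hinf : f none = none) (c : F) :
    f (some c) = some (fmap f c) := by
  cases h : f (some c) with
  | none => exact absurd (f.injective (h.trans hinf.symm)) (Option.some_ne_none c)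
  | some v => simp [fmap, h]

theorem fmap_injective {f : Equiv.Perm (Option F)} (hinf : f none = none) :
    Function.Injective (fmap f) := fun c d h =>
  Option.some_injective F <| f.injective <| by
    rw [apply_some_eq_some_fmap hinf, apply_some_eq_some_fmap hinf, h]

theorem fmap_ne_one {f : Equiv.Perm (Option F)} (hinf : f none = none)
    (h1 : f (some 1) = some 1) {c : F} (hc : c ≠ 1) : fmap f c ≠ 1 := by
  simpa [fmap, h1] using (fmap_injective hinf).ne hc

theorem OPreserving.symm {O : Set F} {f : Equiv.Perm (Option F)} (hf : OPreserving O f) :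
    OPreserving O f.symm := by
  intro a b c d hab hac had hbc hbd hcd
  simpa using (hf (f.symm a) (f.symm b) (f.symm c) (f.symm d) (f.symm.injective.ne hab)
    (f.symm.injective.ne hac) (f.symm.injective.ne had) (f.symm.injective.ne hbc)
    (f.symm.injective.ne hbd) (f.symm.injective.ne hcd)).symm

section transport

variable {O : Set F} {f : Equiv.Perm (Option F)} {A B C A' B' C' : Option F} {p p' : F → Option F}

theorem OPreserving.crossRatio_apply_mem_and_eq (hO : ∀ x ∈ O, x ≠ 0 ∧ x ≠ 1)
    (hf : OPreserving O f) (hAB : A ≠ B) (hAC : A ≠ C) (hBC : B ≠ C)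
    (hA : f A = A') (hB : f B = B') (hC : f C = C')
    (hp : ∀ x ∈ O, crossRatio A B C (p x) = x) (hp' : ∀ y ∈ O, crossRatio A' B' C' (p' y) = y)
    {x : F} (hx : x ∈ O) :
    crossRatio A' B' C' (f (p x)) ∈ O ∧ f (p x) = p' (crossRatio A' B' C' (f (p x))) := by
  subst hA hB hC
  have hpx : p x ∉ ({A, B, C} : Set (Option F)) := notMem_of_crossRatio_mem hO hAC hBC ((hp x hx).symm ▸ hx)
  simp only [Set.mem_insert_iff, Set.mem_singleton_iff, not_or] at hpx
  obtain ⟨hpA, hpB, hpC⟩ := hpx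
  set y := crossRatio (f A) (f B) (f C) (f (p x))
  have hy : y ∈ O := by
    rw [← hf A B C (p x) hAB hAC (Ne.symm hpA) hBC (Ne.symm hpB) (Ne.symm hpC), hp x hx]
    exact hx
  refine ⟨hy, crossRatio_injOn (f.injective.ne hAB) (f.injective.ne hAC) (f.injective.ne hBC)
    ?_ (notMem_of_crossRatio_mem hO (f.injective.ne hAC) (f.injective.ne hBC) ((hp' y hy).symm ▸ hy))
    (hp' y hy).symm⟩
  simp only [Set.mem_compl_iff, Set.mem_insert_iff, Set.mem_singleton_iff, f.injective.eq_iff]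
  tauto

theorem OPreserving.exists_perm_of_crossRatio_eq (hO : ∀ x ∈ O, x ≠ 0 ∧ x ≠ 1)
    (hf : OPreserving O f) (hAB : A ≠ B) (hAC : A ≠ C) (hBC : B ≠ C)
    (hA : f A = A') (hB : f B = B') (hC : f C = C')
    (hp : ∀ x ∈ O, crossRatio A B C (p x) = x) (hp' : ∀ y ∈ O, crossRatio A' B' C' (p' y) = y) :
    ∃ g : O ≃ O, ∀ (x : F) (hx : x ∈ O), f (p x) = p' (g ⟨x, hx⟩) := by
  subst hA hB hC
  have fwd := fun x (hx : x ∈ O) =>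
    hf.crossRatio_apply_mem_and_eq hO hAB hAC hBC rfl rfl rfl hp hp' hx
  have bwd := fun y (hy : y ∈ O) =>
    hf.symm.crossRatio_apply_mem_and_eq hO (f.injective.ne hAB) (f.injective.ne hAC)
      (f.injective.ne hBC) (f.symm_apply_apply A) (f.symm_apply_apply B) (f.symm_apply_apply C)
      hp' hp hy
  refine ⟨⟨fun x => ⟨_, (fwd x x.2).1⟩, fun y => ⟨_, (bwd y y.2).1⟩, ?_, ?_⟩,
    fun x hx => (fwd x hx).2⟩
  · rintro ⟨x, hx⟩
    simp only [← (fwd x hx).2, Equiv.symm_apply_apply, hp x hx]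
  · rintro ⟨y, hy⟩
    simp only [← (bwd y hy).2, Equiv.apply_symm_apply, hp' y hy]

end transport

section formulas

variable {a b : F} (x : F)

theorem crossRatio_none_some_some_affine (hab : a ≠ b) :
    crossRatio none (some b) (some a) (some (a * x + b * (1 - x))) = x := by
  simp only [crossRatio]
  rw [div_eq_iff (sub_ne_zero.mpr hab)]
  ring

theorem crossRatio_some_none_some_div (hab : a ≠ b) (hx : x ≠ 0) :
    crossRatio (some b) none (some a) (some ((a - (1 - x) * b) / x)) = x := by
  simp only [crossRatio]
  rw [div_sub' hx, show a - (1 - x) * b - x * b = a - b by ring]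
  field_simp [sub_ne_zero.mpr hab]

theorem crossRatio_some_some_none_div (hab : a ≠ b) (hx : x ≠ 1) :
    crossRatio (some b) (some a) none (some ((a - x * b) / (1 - x))) = x := by
  have h1x : 1 - x ≠ 0 := sub_ne_zero.mpr hx.symm
  simp only [crossRatio]
  rw [div_sub' h1x, div_sub' h1x, div_div_div_cancel_right₀ h1x,
    show a - x * b - (1 - x) * a = x * (a - b) by ring,
    show a - x * b - (1 - x) * b = a - b by ring]
  field_simp [sub_ne_zero.mpr hab]

theorem crossRatio_some_some_one_fdiv (hab : a ≠ b) (ha : a ≠ 1) (hb : b ≠ 1) :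
    crossRatio (some b) (some a) (some 1)
      (fdiv (a * b * x - b * x - a * b + a) (a * x - x - b + 1)) = x := by
  have h1a : 1 - a ≠ 0 := sub_ne_zero.mpr ha.symm
  unfold fdiv
  split_ifs with hd
  · simp only [crossRatio]
    rw [div_eq_iff h1a]
    linear_combination hd
  · simp only [crossRatio]
    rw [div_sub' hd, div_sub' hd, div_div_div_cancel_right₀ hd,
      show a * b * x - b * x - a * b + a - (a * x - x - b + 1) * a = x * (a - b) * (1 - a) by ring,
      show a * b * x - b * x - a * b + a - (a * x - x - b + 1) * b = (a - b) * (1 - b) by ring]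
    field_simp [sub_ne_zero.mpr hab, sub_ne_zero.mpr hb.symm]

theorem crossRatio_some_one_some_fdiv (hab : a ≠ b) (ha : a ≠ 1) (hb : b ≠ 1) :
    crossRatio (some b) (some 1) (some a)
      (fdiv (a - b - a * b * x + b * x) (a - b - a * x + x)) = x := by
  have ha1 : a - 1 ≠ 0 := sub_ne_zero.mpr ha
  unfold fdiv
  split_ifs with hd
  · simp only [crossRatio]
    rw [div_eq_iff ha1]
    linear_combination hd
  · simp only [crossRatio]
    rw [div_sub' hd, div_sub' hd, div_div_div_cancel_right₀ hd,
      show a - b - a * b * x + b * x - (a - b - a * x + x) * 1 = x * (a - 1) * (1 - b) by ring,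
      show a - b - a * b * x + b * x - (a - b - a * x + x) * b = (a - b) * (1 - b) by ring]
    field_simp [sub_ne_zero.mpr hab, sub_ne_zero.mpr hb.symm]

end formulas

theorem OPreserving.exists_perm_of_crossRatio_eq_some {O : Set F} {f : Equiv.Perm (Option F)}
    {A B C A' B' C' : Option F} {p p' : F → F} (hO : ∀ x ∈ O, x ≠ 0 ∧ x ≠ 1)
    (hf : OPreserving O f) (hinf : f none = none) (hAB : A ≠ B) (hAC : A ≠ C) (hBC : B ≠ C)
    (hA : f A = A') (hB : f B = B') (hC : f C = C')
    (hp : ∀ x ∈ O, crossRatio A B C (some (p x)) = x)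
    (hp' : ∀ y ∈ O, crossRatio A' B' C' (some (p' y)) = y) :
    ∃ g : O ≃ O, ∀ (x : F) (hx : x ∈ O), fmap f (p x) = p' (g ⟨x, hx⟩) := by
  obtain ⟨g, hg⟩ := hf.exists_perm_of_crossRatio_eq hO hAB hAC hBC hA hB hC hp hp'
  refine ⟨g, fun x hx => Option.some_injective F ?_⟩
  rw [← apply_some_eq_some_fmap hinf]
  exact hg x hx

end

theorem exists_perms_tau_rho_chi_alpha_beta_general {F : Type*} [Field F]
    (O : Set F) (hO : ∀ x ∈ O, x ≠ 0 ∧ x ≠ 1)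
    (f : Equiv.Perm (Option F)) (hf : OPreserving O f)
    (hinf : f none = none) (h1 : f (some 1) = some 1)
    (a b : F) (hab : a ≠ b) :
    (∃ τ : {x // x ∈ O} ≃ {x // x ∈ O}, ∀ (x : F) (hx : x ∈ O),
      fmap f (a * x + b * (1 - x)) =
        fmap f a * (τ ⟨x, hx⟩ : F) + fmap f b * (1 - (τ ⟨x, hx⟩ : F))) ∧
    (∃ ρ : {x // x ∈ O} ≃ {x // x ∈ O}, ∀ (x : F) (hx : x ∈ O),
      fmap f ((a - (1 - x) * b) / x) =
        (fmap f a - (1 - (ρ ⟨x, hx⟩ : F)) * fmap f b) / (ρ ⟨x, hx⟩ : F)) ∧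
    (∃ χ : {x // x ∈ O} ≃ {x // x ∈ O}, ∀ (x : F) (hx : x ∈ O),
      fmap f ((a - x * b) / (1 - x)) =
        (fmap f a - (χ ⟨x, hx⟩ : F) * fmap f b) / (1 - (χ ⟨x, hx⟩ : F))) ∧
    (a ≠ 1 → b ≠ 1 →
      (∃ α : {x // x ∈ O} ≃ {x // x ∈ O}, ∀ (x : F) (hx : x ∈ O),
        f (fdiv (a * b * x - b * x - a * b + a) (a * x - x - b + 1)) =
          fdiv (fmap f a * fmap f b * (α ⟨x, hx⟩ : F) - fmap f b * (α ⟨x, hx⟩ : F) -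
                  fmap f a * fmap f b + fmap f a)
               (fmap f a * (α ⟨x, hx⟩ : F) - (α ⟨x, hx⟩ : F) - fmap f b + 1)) ∧
      (∃ β : {x // x ∈ O} ≃ {x // x ∈ O}, ∀ (x : F) (hx : x ∈ O),
        f (fdiv (a - b - a * b * x + b * x) (a - b - a * x + x)) =
          fdiv (fmap f a - fmap f b - fmap f a * fmap f b * (β ⟨x, hx⟩ : F) +
                  fmap f b * (β ⟨x, hx⟩ : F))
               (fmap f a - fmap f b - fmap f a * (β ⟨x, hx⟩ : F) + (β ⟨x, hx⟩ : F)))) := by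
  have hab' : fmap f a ≠ fmap f b := (fmap_injective hinf).ne hab
  have hfa := apply_some_eq_some_fmap hinf a
  have hfb := apply_some_eq_some_fmap hinf b
  refine ⟨?_, ?_, ?_, fun ha hb => ?_⟩
  · exact hf.exists_perm_of_crossRatio_eq_some hO hinf (by simp) (by simp) (by simp [hab.symm])
      hinf hfb hfa (fun x _ => crossRatio_none_some_some_affine x hab)
      (fun y _ => crossRatio_none_some_some_affine y hab')
  · exact hf.exists_perm_of_crossRatio_eq_some hO hinf (by simp) (by simp [hab.symm]) (by simp)
      hfb hinf hfa (fun x hx => crossRatio_some_none_some_div x hab (hO x hx).1)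
      (fun y hy => crossRatio_some_none_some_div y hab' (hO y hy).1)
  · exact hf.exists_perm_of_crossRatio_eq_some hO hinf (by simp [hab.symm]) (by simp) (by simp)
      hfb hfa hinf (fun x hx => crossRatio_some_some_none_div x hab (hO x hx).2)
      (fun y hy => crossRatio_some_some_none_div y hab' (hO y hy).2)
  have ha' := fmap_ne_one hinf h1 ha
  have hb' := fmap_ne_one hinf h1 hb
  exact ⟨hf.exists_perm_of_crossRatio_eq hO (by simp [hab.symm]) (by simp [hb]) (by simp [ha])
      hfb hfa h1 (fun x _ => crossRatio_some_some_one_fdiv x hab ha hb)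
      (fun y _ => crossRatio_some_some_one_fdiv y hab' ha' hb'),
    hf.exists_perm_of_crossRatio_eq hO (by simp [hb]) (by simp [hab.symm]) (by simp [ha.symm])
      hfb h1 hfa (fun x _ => crossRatio_some_one_some_fdiv x hab ha hb)
      (fun y _ => crossRatio_some_one_some_fdiv y hab' ha' hb')⟩

/-- Corollary 2.4: existence of the permutations `τ_{a,b}`, `ρ_{a,b}`, `χ_{a,b}`,
`α_{a,b}`, `β_{a,b}` of `O`. -/
theorem exists_perms_tau_rho_chi_alpha_beta {F : Type*} [Field F]
    (O : Set F) (hne : O.Nonempty) (hO : ∀ x ∈ O, x ≠ 0 ∧ x ≠ 1)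
    (f : Equiv.Perm (Option F)) (hf : OPreserving O f)
    (hinf : f none = none) (h0 : f (some 0) = some 0) (h1 : f (some 1) = some 1)
    (a b : F) (hab : a ≠ b) :
    (∃ τ : {x // x ∈ O} ≃ {x // x ∈ O}, ∀ (x : F) (hx : x ∈ O),
      fmap f (a * x + b * (1 - x)) =
        fmap f a * (τ ⟨x, hx⟩ : F) + fmap f b * (1 - (τ ⟨x, hx⟩ : F))) ∧
    (∃ ρ : {x // x ∈ O} ≃ {x // x ∈ O}, ∀ (x : F) (hx : x ∈ O),
      fmap f ((a - (1 - x) * b) / x) =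
        (fmap f a - (1 - (ρ ⟨x, hx⟩ : F)) * fmap f b) / (ρ ⟨x, hx⟩ : F)) ∧
    (∃ χ : {x // x ∈ O} ≃ {x // x ∈ O}, ∀ (x : F) (hx : x ∈ O),
      fmap f ((a - x * b) / (1 - x)) =
        (fmap f a - (χ ⟨x, hx⟩ : F) * fmap f b) / (1 - (χ ⟨x, hx⟩ : F))) ∧
    (a ≠ 1 → b ≠ 1 →
      (∃ α : {x // x ∈ O} ≃ {x // x ∈ O}, ∀ (x : F) (hx : x ∈ O),
        f (fdiv (a * b * x - b * x - a * b + a) (a * x - x - b + 1)) =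
          fdiv (fmap f a * fmap f b * (α ⟨x, hx⟩ : F) - fmap f b * (α ⟨x, hx⟩ : F) -
                  fmap f a * fmap f b + fmap f a)
               (fmap f a * (α ⟨x, hx⟩ : F) - (α ⟨x, hx⟩ : F) - fmap f b + 1)) ∧
      (∃ β : {x // x ∈ O} ≃ {x // x ∈ O}, ∀ (x : F) (hx : x ∈ O),
        f (fdiv (a - b - a * b * x + b * x) (a - b - a * x + x)) =
          fdiv (fmap f a - fmap f b - fmap f a * fmap f b * (β ⟨x, hx⟩ : F) +
                  fmap f b * (β ⟨x, hx⟩ : F))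
               (fmap f a - fmap f b - fmap f a * (β ⟨x, hx⟩ : F) + (β ⟨x, hx⟩ : F)))) :=
  exists_perms_tau_rho_chi_alpha_beta_general O hO f hf hinf h1 a b hab
end

section
/- Assume the Hypothesis. Then for every a,b ∈ K and x ∈ O, f(a) + (1−x)f(b) ∈ f(K). -/
open scoped Classical

lemma fsome {F : Type*} [Field F] (f : Equiv.Perm (Option F)) (hinf : f none = none) (u : F) :
    f (some u) = some (fmap f u) := by
  cases h : f (some u) with
  | none => exact absurd (f.injective (h.trans hinf.symm)) (by simp)
  | some v => simp [fmap, h]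

lemma fmap_inj {F : Type*} [Field F] (f : Equiv.Perm (Option F)) (hinf : f none = none)
    {u v : F} (h : fmap f u = fmap f v) : u = v := by
  have h2 : f (some u) = f (some v) := by rw [fsome f hinf u, fsome f hinf v, h]
  simpa using f.injective h2

/-- Key step 1: `f(K)` is closed under division by elements of `O`. -/
lemma div_mem_image {F : Type*} [Field F]
    (O : Set F) (hO : ∀ x ∈ O, x ≠ 0 ∧ x ≠ 1)
    (f : Equiv.Perm (Option F)) (hf : OPreserving O f)
    (hinf : f none = none) (h0 : f (some 0) = some 0) :
    ∀ u ∈ Subfield.closure O, ∀ x ∈ O,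
      fmap f u / x ∈ fmap f '' (Subfield.closure O : Set F) := by
  intro u hu x hx
  obtain ⟨hx0, hx1⟩ := hO x hx
  by_cases hfu : fmap f u = 0
  · exact ⟨u, hu, by simp [hfu]⟩
  have hu0 : u ≠ 0 := by
    intro h; apply hfu
    rw [h]; simp [fmap, h0]
  set y : F := fmap f u / x with hy
  have hy0 : y ≠ 0 := div_ne_zero hfu hx0
  obtain ⟨c, hc⟩ : ∃ c : F, f.symm (some y) = some c := by
    cases h : f.symm (some y) with
    | none =>
        exfalso
        have : (none : Option F) = some y := by rw [← hinf, ← h, Equiv.apply_symm_apply]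
        simp at this
    | some c => exact ⟨c, rfl⟩
  have hfc : f (some c) = some y := by rw [← hc, Equiv.apply_symm_apply]
  have hfmc : fmap f c = y := by rw [fmap, hfc]; rfl
  have hc0 : c ≠ 0 := by
    intro h; rw [h, h0] at hfc; exact hy0 (by simpa using hfc.symm)
  have hcu : c ≠ u := by
    intro h
    rw [h, fsome f hinf u] at hfc
    have : fmap f u = y := by simpa using hfc
    rw [hy] at this
    apply hx1
    field_simp at this
    exact this
  -- apply O-preservation to (∞, 0, c, u)
  have key := (hf none (some 0) (some c) (some u) (by simp) (by simp) (by simp)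
      (by simpa using (Ne.symm hc0)) (by simpa using (Ne.symm hu0)) (by simpa using hcu)).mpr
  rw [hinf, h0, hfc, fsome f hinf u] at key
  have himg : crossRatio (none : Option F) (some 0) (some y) (some (fmap f u)) ∈ O := by
    show (fmap f u - 0) / (y - 0) ∈ O
    have heq : (fmap f u - 0) / (y - 0) = x := by
      rw [hy, sub_zero, sub_zero]; field_simp
    rw [heq]; exact hx
  have hpre : (u - 0) / (c - 0) ∈ O := key himg
  rw [sub_zero, sub_zero] at hpre
  have ht : u / c ∈ Subfield.closure O := Subfield.subset_closure hpre
  have hcmem : c ∈ Subfield.closure O := by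
    have : c = u / (u / c) := by
      rw [div_div_eq_mul_div, mul_comm, mul_div_assoc, div_self hu0, mul_one]
    rw [this]
    exact Subfield.div_mem _ hu ht
  exact ⟨c, hcmem, hfmc⟩

/-- Key step 2: `f(K)` is closed under affine combinations with ratio in `O`. -/
lemma affine_mem_image {F : Type*} [Field F]
    (O : Set F) (hO : ∀ x ∈ O, x ≠ 0 ∧ x ≠ 1)
    (f : Equiv.Perm (Option F)) (hf : OPreserving O f)
    (hinf : f none = none) :
    ∀ u ∈ Subfield.closure O, ∀ v ∈ Subfield.closure O, ∀ x ∈ O,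
      fmap f u + x * (fmap f v - fmap f u) ∈ fmap f '' (Subfield.closure O : Set F) := by
  intro u hu v hv x hx
  obtain ⟨hx0, hx1⟩ := hO x hx
  by_cases huv : u = v
  · exact ⟨u, hu, by rw [huv]; ring⟩
  have hfuv : fmap f u ≠ fmap f v := fun h => huv (fmap_inj f hinf h)
  set y : F := fmap f u + x * (fmap f v - fmap f u) with hy
  obtain ⟨c, hc⟩ : ∃ c : F, f.symm (some y) = some c := by
    cases h : f.symm (some y) with
    | none =>
        exfalso
        have : (none : Option F) = some y := by rw [← hinf, ← h, Equiv.apply_symm_apply]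
        simp at this
    | some c => exact ⟨c, rfl⟩
  have hfc : f (some c) = some y := by rw [← hc, Equiv.apply_symm_apply]
  have hfmc : fmap f c = y := by rw [fmap, hfc]; rfl
  have hcu : c ≠ u := by
    intro h
    have : fmap f u = y := by rw [← h, hfmc]
    rw [hy] at this
    exact (mul_ne_zero hx0 (sub_ne_zero.2 (Ne.symm hfuv))) (by linear_combination -this)
  have hcv : c ≠ v := by
    intro h
    have : fmap f v = y := by rw [← h, hfmc]
    rw [hy] at this
    exact (mul_ne_zero (sub_ne_zero.2 hx1) (sub_ne_zero.2 (Ne.symm hfuv)))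
      (by linear_combination -this)
  have key := (hf none (some u) (some v) (some c) (by simp) (by simp) (by simp)
      (by simpa using huv) (by simpa using (Ne.symm hcu)) (by simpa using (Ne.symm hcv))).mpr
  rw [hinf, fsome f hinf u, fsome f hinf v, hfc] at key
  have himg : crossRatio (none : Option F) (some (fmap f u)) (some (fmap f v)) (some y) ∈ O := by
    show (y - fmap f u) / (fmap f v - fmap f u) ∈ O
    rw [hy]
    have : fmap f u + x * (fmap f v - fmap f u) - fmap f u = x * (fmap f v - fmap f u) := by ring
    rw [this, mul_div_assoc, div_self (sub_ne_zero.2 (Ne.symm hfuv)), mul_one]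
    exact hx
  have hpre : (c - u) / (v - u) ∈ O := key himg
  have ht : (c - u) / (v - u) ∈ Subfield.closure O := Subfield.subset_closure hpre
  have hcmem : c ∈ Subfield.closure O := by
    have hvu : v - u ≠ 0 := sub_ne_zero.2 (Ne.symm huv)
    have : c = u + (c - u) / (v - u) * (v - u) := by
      rw [div_mul_cancel₀ _ hvu]; ring
    rw [this]
    exact Subfield.add_mem _ hu (Subfield.mul_mem _ ht (Subfield.sub_mem _ hv hu))
  exact ⟨c, hcmem, hfmc⟩

/-- Here `Subfield.closure O` is the subfield `K = k(O)` of `F` generated by `O`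
(over the prime field `k`), and `fmap f '' K` is the image `f(K)` of `K` under `f`. -/
theorem first_closure_one {F : Type*} [Field F]
    (O : Set F) (hne : O.Nonempty) (hO : ∀ x ∈ O, x ≠ 0 ∧ x ≠ 1)
    (f : Equiv.Perm (Option F)) (hf : OPreserving O f)
    (hinf : f none = none) (h0 : f (some 0) = some 0) (h1 : f (some 1) = some 1) :
    ∀ a ∈ Subfield.closure O, ∀ b ∈ Subfield.closure O, ∀ x ∈ O,
      fmap f a + (1 - x) * fmap f b ∈ fmap f '' (Subfield.closure O : Set F) := by
  intro a ha b hb x hx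
  obtain ⟨hx0, hx1⟩ := hO x hx
  obtain ⟨c, hc, hfc⟩ := div_mem_image O hO f hf hinf h0 a ha x hx
  obtain ⟨d, hd, hfd⟩ := affine_mem_image O hO f hf hinf b hb c hc x hx
  refine ⟨d, hd, ?_⟩
  rw [hfd, hfc]
  field_simp
  ring
end

section
/- Assume the Hypothesis. Then for every a,b ∈ K and x ∈ O, x·f(a) + f(b) ∈ f(K). -/
open scoped Classical

/-! Write `g` for the bijection of `F` induced by `f`, and `K = k(O)`. Since `f` fixes `∞`, an
`O`-preserving `f` pulls a cross-ratio `[∞, g u; g v, t]` or `[g u, g v; ∞, t]` lying in `O`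
back to a cross-ratio with the same shape lying in `O ⊆ K`, and such a cross-ratio determines its
fourth point rationally from the other three. For `x ∈ O` this makes `g(K)` closed under
`(p, q) ↦ p + x (q - p)` and lets one solve `t + x (p - t) ∈ g(K)` for `t`. As `g 0 = 0`, the
second fact gives `s = g b / (1 - x) ∈ g(K)`, and then the first gives
`s + x (g a - s) = x g a + g b ∈ g(K)`. -/

section

variable {F : Type*} [Field F]

namespace Subfield

variable {K : Subfield F} {u v d : F}

theorem mem_of_crossRatio_none_some_some_mem (hu : u ∈ K) (hv : v ∈ K) (huv : u ≠ v)
    (h : crossRatio none (some u) (some v) (some d) ∈ K) : d ∈ K := by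
  have hd : d = u + crossRatio none (some u) (some v) (some d) * (v - u) := by
    simp only [crossRatio]
    field_simp [sub_ne_zero.2 huv.symm]
    ring
  rw [hd]
  exact K.add_mem hu (K.mul_mem h (K.sub_mem hv hu))

theorem mem_of_crossRatio_some_some_none_mem (hu : u ∈ K) (hv : v ∈ K) (huv : u ≠ v)
    (hdu : d ≠ u) (h : crossRatio (some u) (some v) none (some d) ∈ K) : d ∈ K := by
  have hdu' : d - u ≠ 0 := sub_ne_zero.2 hdu
  have hvu : v - u ≠ 0 := sub_ne_zero.2 huv.symm
  have hy : 1 - crossRatio (some u) (some v) none (some d) = (v - u) / (d - u) := by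
    simp only [crossRatio]
    field_simp
    ring
  have hd : d = u + (v - u) / (1 - crossRatio (some u) (some v) none (some d)) := by
    rw [hy]
    field_simp
    ring
  rw [hd]
  exact K.add_mem hu (K.div_mem (K.sub_mem hv hu) (K.sub_mem K.one_mem h))

end Subfield

variable {O : Set F} {f : Equiv.Perm (Option F)}

theorem apply_eq_map_fmap (hinf : f none = none) (z : Option F) : f z = z.map (fmap f) := by
  rcases z with _ | y
  · exact hinf
  · rcases h : f (some y) with _ | z
    · exact absurd (f.injective (h.trans hinf.symm)) (Option.some_ne_none y)
    · simp [fmap, h]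

theorem fmap_bijective (hinf : f none = none) : Function.Bijective (fmap f) := by
  have hmap := apply_eq_map_fmap hinf
  refine ⟨fun y z h => Option.some.inj (f.injective ?_), fun t => ?_⟩
  · rw [hmap, hmap, Option.map_some, Option.map_some, h]
  · rcases hz : f.symm (some t) with _ | z
    · have := f.apply_symm_apply (some t)
      rw [hz, hinf] at this
      exact absurd this.symm (Option.some_ne_none t)
    · refine ⟨z, Option.some.inj ?_⟩
      rw [← Option.map_some, ← hmap, ← hz, f.apply_symm_apply]

theorem fmap_zero (h0 : f (some 0) = some 0) : fmap f 0 = 0 := by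
  simp [fmap, h0]

theorem OPreserving.exists_fmap_eq_crossRatio_mem (hf : OPreserving O f) (hinf : f none = none)
    {a b c : Option F} (hab : a ≠ b) (hac : a ≠ c) (hbc : b ≠ c) {t : F}
    (hat : a.map (fmap f) ≠ some t) (hbt : b.map (fmap f) ≠ some t)
    (hct : c.map (fmap f) ≠ some t)
    (h : crossRatio (a.map (fmap f)) (b.map (fmap f)) (c.map (fmap f)) (some t) ∈ O) :
    ∃ d, fmap f d = t ∧ crossRatio a b c (some d) ∈ O := by
  obtain ⟨d, rfl⟩ := (fmap_bijective hinf).2 t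
  refine ⟨d, rfl, (hf a b c (some d) hab hac ?_ hbc ?_ ?_).2 ?_⟩
  · exact ne_of_apply_ne (Option.map (fmap f)) hat
  · exact ne_of_apply_ne (Option.map (fmap f)) hbt
  · exact ne_of_apply_ne (Option.map (fmap f)) hct
  · simpa only [apply_eq_map_fmap hinf, Option.map_some] using h

section ImageClosure

variable (hf : OPreserving O f) (hinf : f none = none) {K : Subfield F} (hOK : O ⊆ K) {x : F}
  (hx : x ∈ O) (hx0 : x ≠ 0) (hx1 : x ≠ 1)
include hf hinf hOK hx hx0 hx1

theorem add_mul_sub_mem_image_fmap {p q : F}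
    (hp : p ∈ fmap f '' (K : Set F))
    (hq : q ∈ fmap f '' (K : Set F)) :
    p + x * (q - p) ∈ fmap f '' (K : Set F) := by
  obtain ⟨u, hu, rfl⟩ := hp
  obtain ⟨v, hv, rfl⟩ := hq
  by_cases huv : fmap f u = fmap f v
  · simpa [huv] using Set.mem_image_of_mem (fmap f) hv
  have huv' : u ≠ v := ne_of_apply_ne (fmap f) huv
  have hvu : fmap f v - fmap f u ≠ 0 := sub_ne_zero.2 (Ne.symm huv)
  have hcr : crossRatio none (some (fmap f u)) (some (fmap f v))
      (some (fmap f u + x * (fmap f v - fmap f u))) = x := by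
    simp only [crossRatio]
    field_simp
    ring
  obtain ⟨d, hd, hdO⟩ := hf.exists_fmap_eq_crossRatio_mem hinf (a := none) (b := some u)
    (c := some v) (t := fmap f u + x * (fmap f v - fmap f u)) (by simp) (by simp)
    (by simpa using huv') (by simp) (by simp [hx0, hvu])
    (by
      simp only [Option.map_some, ne_eq, Option.some.injEq]
      intro h
      exact hx1 (mul_right_cancel₀ hvu (by linear_combination -h)))
    (by simpa [hcr] using hx)
  exact ⟨d, Subfield.mem_of_crossRatio_none_some_some_mem hu hv huv' (hOK hdO), hd⟩

theorem mem_image_fmap_of_add_mul_sub_mem_image {p t : F}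
    (hp : p ∈ fmap f '' (K : Set F))
    (ht : t + x * (p - t) ∈ fmap f '' (K : Set F)) :
    t ∈ fmap f '' (K : Set F) := by
  obtain ⟨u, hu, rfl⟩ := hp
  obtain ⟨v, hv, hvt⟩ := ht
  by_cases htu : t = fmap f u
  · exact ⟨u, hu, htu.symm⟩
  have hut : fmap f u - t ≠ 0 := sub_ne_zero.2 (Ne.symm htu)
  have huv : fmap f u ≠ fmap f v := by
    rw [hvt]
    intro h
    exact hx1 (mul_right_cancel₀ hut (by linear_combination -h))
  have huv' : u ≠ v := ne_of_apply_ne (fmap f) huv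
  have hcr : crossRatio (some (fmap f u)) (some (fmap f v)) none (some t) = x := by
    simp only [crossRatio]
    rw [hvt, div_eq_iff (sub_ne_zero.2 htu)]
    ring
  obtain ⟨d, hd, hdO⟩ := hf.exists_fmap_eq_crossRatio_mem hinf (a := some u) (b := some v)
    (c := none) (t := t) (by simpa using huv') (by simp) (by simp) (by simpa using Ne.symm htu)
    (by simp [hvt, hx0, hut]) (by simp) (by simpa [hcr] using hx)
  have hdu : d ≠ u := ne_of_apply_ne (fmap f) (hd ▸ htu)
  exact ⟨d, Subfield.mem_of_crossRatio_some_some_none_mem hu hv huv' hdu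
    (hOK hdO), hd⟩

end ImageClosure

end

theorem first_closure_two_general {F : Type*} [Field F]
    (O : Set F) (hO : ∀ x ∈ O, x ≠ 0 ∧ x ≠ 1)
    (f : Equiv.Perm (Option F)) (hf : OPreserving O f)
    (hinf : f none = none) (h0 : f (some 0) = some 0) :
    ∀ a ∈ Subfield.closure O, ∀ b ∈ Subfield.closure O, ∀ x ∈ O,
      x * fmap f a + fmap f b ∈ fmap f '' (Subfield.closure O : Set F) := by
  intro a ha b hb x hx
  obtain ⟨hx0, hx1⟩ := hO x hx
  have hOK : O ⊆ Subfield.closure O := Subfield.subset_closure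
  have h1x : 1 - x ≠ 0 := sub_ne_zero.2 (Ne.symm hx1)
  have hs : fmap f b / (1 - x) ∈ fmap f '' (Subfield.closure O : Set F) := by
    refine mem_image_fmap_of_add_mul_sub_mem_image hf hinf hOK hx hx0 hx1
      ⟨0, zero_mem _, fmap_zero h0⟩ ?_
    convert Set.mem_image_of_mem (fmap f) hb using 1
    field_simp
    ring
  convert add_mul_sub_mem_image_fmap hf hinf hOK hx hx0 hx1 hs ⟨a, ha, rfl⟩ using 1
  field_simp
  ring

/-- Here `Subfield.closure O` is the subfield `K = k(O)` of `F` generated by `O`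
(over the prime field `k`), and `fmap f '' K` is the image `f(K)` of `K` under `f`. -/
theorem first_closure_two {F : Type*} [Field F]
    (O : Set F) (hne : O.Nonempty) (hO : ∀ x ∈ O, x ≠ 0 ∧ x ≠ 1)
    (f : Equiv.Perm (Option F)) (hf : OPreserving O f)
    (hinf : f none = none) (h0 : f (some 0) = some 0) (h1 : f (some 1) = some 1) :
    ∀ a ∈ Subfield.closure O, ∀ b ∈ Subfield.closure O, ∀ x ∈ O,
      x * fmap f a + fmap f b ∈ fmap f '' (Subfield.closure O : Set F) :=
  first_closure_two_general O hO f hf hinf h0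
end

section
/- Let F be a field and K ⊊ F an Aut(F)-invariant proper subfield. A subset of F ∪ {∞} is a K-chain containing ∞ if and only if it is a projective affine line, i.e. a set of the form (Ka + b) ∪ {∞} for some a,b ∈ F with a ≠ 0 (where F is regarded as a K-vector space). -/
open scoped Classical

/-- The map `x ↦ (a σ(x) + b)/(c σ(x) + d)` on the projective line `F ∪ {∞}`,
with the usual conventions at `∞`. -/
noncomputable def moebius {F : Type*} [Field F] (σ : F ≃+* F) (a b c d : F) :
    Option F → Option F
  | none => if c = 0 then none else some (a / c)
  | some x => if c * σ x + d = 0 then none else some ((a * σ x + b) / (c * σ x + d))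

/-- `PΓL₂(F)`: the group of permutations of the projective line `F ∪ {∞}` of the
form `x ↦ (a σ(x) + b)/(c σ(x) + d)` with `ad - bc ≠ 0` and `σ ∈ Aut(F)`. -/
def PGammaL2 (F : Type*) [Field F] : Set (Equiv.Perm (Option F)) :=
  {f | ∃ (σ : F ≃+* F) (a b c d : F), a * d - b * c ≠ 0 ∧
        ∀ x, f x = moebius σ a b c d x}

/-- A `K`-chain: the image of `K ∪ {∞}` under an element of `PΓL₂(F)`. -/
def IsKChain {F : Type*} [Field F] (K : Subfield F) (X : Set (Option F)) : Prop :=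
  ∃ g ∈ PGammaL2 F, X = ⇑g '' (some '' (K : Set F) ∪ {none})

/-! Write `g ∈ PΓL₂(F)` as a Möbius map `x ↦ (ax + b)/(cx + d)` after a field automorphism `σ`;
as `K` is `Aut(F)`-invariant, `σ` fixes `K ∪ {∞}` setwise. For `c = 0` the Möbius map is affine,
so it sends `K ∪ {∞}` to a projective affine line. For `c ≠ 0` it is the translation by `d/c`,
then `x ↦ 1/x`, then the affine map `x ↦ x(bc - ad)/c² + a/c`; here `∞` is in the image exactly
when the pole `-d/c` lies in `K`, and then the translation and the inversion both preserve
`K ∪ {∞}`. Conversely an affine map is itself in `PΓL₂(F)` and fixes `∞`. -/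

section

def withInfty {α : Type*} (S : Set α) : Set (Option α) := some '' S ∪ {none}

theorem image_optionMap_withInfty {α β : Type*} (f : α → β) (S : Set α) :
    Option.map f '' withInfty S = withInfty (f '' S) := by
  simp only [withInfty, Set.image_union, Set.image_image, Set.image_singleton, Option.map_some,
    Option.map_none]

theorem image_optionMap_withInfty_self {α : Type*} {f : α → α} {S : Set α} (hf : f '' S = S) :
    Option.map f '' withInfty S = withInfty S := by
  rw [image_optionMap_withInfty, hf]

theorem AddSubgroup.image_add_right_of_mem {G : Type*} [AddGroup G] (H : AddSubgroup G) {t : G}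
    (ht : t ∈ H) : (fun y => y + t) '' (H : Set G) = H := by
  ext y
  simp only [Set.image_add_right, Set.mem_preimage, SetLike.mem_coe]
  exact H.add_mem_cancel_right (H.neg_mem ht)

variable {F : Type*} [Field F]

noncomputable def projInv : Option F → Option F
  | none => some 0
  | some x => if x = 0 then none else some x⁻¹

theorem projInv_involutive : Function.Involutive (projInv (F := F)) := by
  rintro (_ | x)
  · simp [projInv]
  · by_cases hx : x = 0 <;> simp [projInv, hx]

theorem projInv_image_withInfty (K : Subfield F) :
    projInv '' withInfty (K : Set F) = withInfty K := by
  suffices h : projInv '' withInfty (K : Set F) ⊆ withInfty K from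
    h.antisymm fun x hx => ⟨projInv x, h ⟨x, hx, rfl⟩, projInv_involutive x⟩
  rintro _ ⟨_, ⟨y, hy, rfl⟩ | rfl, rfl⟩
  · by_cases h : y = 0
    · simp [projInv, withInfty, h]
    · simpa [projInv, withInfty, h] using K.inv_mem hy
  · simp [projInv, withInfty]

theorem moebius_apply_eq_moebius_refl (σ : F ≃+* F) (a b c d : F) (x : Option F) :
    moebius σ a b c d x = moebius (RingEquiv.refl F) a b c d (x.map σ) := by
  cases x <;> rfl

theorem moebius_refl_of_c_eq_zero {a b d : F} (hd : d ≠ 0) :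
    moebius (RingEquiv.refl F) a b 0 d = Option.map (fun y => y * (a / d) + b / d) := by
  funext x
  cases x with
  | none => simp [moebius]
  | some x => simp [moebius, hd]; field_simp

theorem moebius_refl_of_c_ne_zero {a b c d : F} (hc : c ≠ 0) :
    moebius (RingEquiv.refl F) a b c d =
      Option.map (fun y => y * ((b * c - a * d) / c ^ 2) + a / c) ∘ projInv ∘
        Option.map (fun y => y + d / c) := by
  funext x
  cases x with
  | none => simp [moebius, projInv, hc]
  | some x =>
    have hx : x + d / c = (c * x + d) / c := by field_simp
    by_cases h : c * x + d = 0
    · simp [moebius, projInv, h, hx]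
    · have h' : x * c + d ≠ 0 := by rwa [mul_comm]
      simp [moebius, projInv, h, hx, hc]
      field_simp
      ring

theorem image_moebius_refl_withInfty_of_c_eq_zero (S : Set F) {a b d : F} (hd : d ≠ 0) :
    moebius (RingEquiv.refl F) a b 0 d '' withInfty S =
      withInfty ((fun y => y * (a / d) + b / d) '' S) := by
  rw [moebius_refl_of_c_eq_zero hd, image_optionMap_withInfty]

theorem image_moebius_refl_withInfty_of_c_ne_zero (K : Subfield F) {a b c d : F} (hc : c ≠ 0)
    (hdc : d / c ∈ K) :
    moebius (RingEquiv.refl F) a b c d '' withInfty (K : Set F) =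
      withInfty ((fun y => y * ((b * c - a * d) / c ^ 2) + a / c) '' K) := by
  have htrans : (fun y => y + d / c) '' (K : Set F) = K :=
    K.toAddSubgroup.image_add_right_of_mem hdc
  rw [moebius_refl_of_c_ne_zero hc, Set.image_comp, Set.image_comp,
    image_optionMap_withInfty_self htrans, projInv_image_withInfty, image_optionMap_withInfty]

theorem div_mem_of_none_mem_image_moebius_refl (K : Subfield F) {a b c d : F} (hc : c ≠ 0)
    (hnone : none ∈ moebius (RingEquiv.refl F) a b c d '' withInfty (K : Set F)) :
    d / c ∈ K := by
  obtain ⟨_, ⟨k, hk, rfl⟩ | rfl, hk₀⟩ := hnone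
  · have hpole : c * k + d = 0 := by
      by_contra h
      simp [moebius, h] at hk₀
    have : d / c = -k := by field_simp; linear_combination hpole
    exact this ▸ K.neg_mem hk
  · simp [moebius, hc] at hk₀

theorem exists_affine_of_none_mem_image_moebius_refl (K : Subfield F) {a b c d : F}
    (hdet : a * d - b * c ≠ 0)
    (hnone : none ∈ moebius (RingEquiv.refl F) a b c d '' withInfty (K : Set F)) :
    ∃ a' b' : F, a' ≠ 0 ∧
      moebius (RingEquiv.refl F) a b c d '' withInfty (K : Set F) =
        withInfty ((fun k => k * a' + b') '' K) := by
  by_cases hc : c = 0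
  · subst hc
    have ha : a ≠ 0 := by rintro rfl; simp at hdet
    have hd : d ≠ 0 := by rintro rfl; simp at hdet
    exact ⟨a / d, b / d, div_ne_zero ha hd, image_moebius_refl_withInfty_of_c_eq_zero _ hd⟩
  · have he : (b * c - a * d) / c ^ 2 ≠ 0 :=
      div_ne_zero (fun h => hdet (by linear_combination -h)) (pow_ne_zero 2 hc)
    exact ⟨_, _, he, image_moebius_refl_withInfty_of_c_ne_zero K hc
      (div_mem_of_none_mem_image_moebius_refl K hc hnone)⟩

theorem image_ringEquiv_eq_of_forall_mem {S : Set F} (hS : ∀ σ : F ≃+* F, ∀ x ∈ S, σ x ∈ S)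
    (σ : F ≃+* F) : σ '' S = S :=
  (Set.image_subset_iff.2 (hS σ)).antisymm fun x hx =>
    ⟨σ.symm x, hS σ.symm x hx, σ.apply_symm_apply x⟩

theorem image_withInfty_eq_image_moebius_refl {S : Set F}
    (hS : ∀ σ : F ≃+* F, ∀ x ∈ S, σ x ∈ S) {g : Equiv.Perm (Option F)} {σ : F ≃+* F}
    {a b c d : F} (hg : ∀ x, g x = moebius σ a b c d x) :
    g '' withInfty S = moebius (RingEquiv.refl F) a b c d '' withInfty S := by
  have hg' : ⇑g = moebius (RingEquiv.refl F) a b c d ∘ Option.map σ :=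
    funext fun x => (hg x).trans (moebius_apply_eq_moebius_refl σ a b c d x)
  rw [hg', Set.image_comp, image_optionMap_withInfty_self (image_ringEquiv_eq_of_forall_mem hS σ)]

theorem exists_mem_PGammaL2_eq_affine {a : F} (ha : a ≠ 0) (b : F) :
    ∃ g ∈ PGammaL2 F, ⇑g = Option.map (fun k => k * a + b) := by
  refine ⟨Equiv.optionCongr ((Equiv.mulRight₀ a ha).trans (Equiv.addRight b)),
    ⟨RingEquiv.refl F, a, b, 0, 1, by simpa using ha, fun x => ?_⟩, rfl⟩
  simp only [moebius_refl_of_c_eq_zero one_ne_zero, div_one]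
  rfl

end

theorem kChain_with_infty_iff_projective_affine_line_general {F : Type*} [Field F]
    (K : Subfield F)
    (hInv : ∀ σ : F ≃+* F, ∀ x ∈ K, σ x ∈ K)
    (X : Set (Option F)) :
    (IsKChain K X ∧ none ∈ X) ↔
      ∃ a b : F, a ≠ 0 ∧
        X = some '' ((fun k : F => k * a + b) '' (K : Set F)) ∪ {none} := by
  constructor
  · rintro ⟨⟨g, ⟨σ, a, b, c, d, hdet, hg⟩, rfl⟩, hnone⟩
    have hX := image_withInfty_eq_image_moebius_refl hInv hg
    obtain ⟨a', b', ha', hline⟩ :=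
      exists_affine_of_none_mem_image_moebius_refl K hdet (hX ▸ hnone)
    exact ⟨a', b', ha', hX.trans hline⟩
  · rintro ⟨a, b, ha, rfl⟩
    obtain ⟨g, hg, hga⟩ := exists_mem_PGammaL2_eq_affine ha b
    exact ⟨⟨g, hg, by rw [hga]; exact (image_optionMap_withInfty _ _).symm⟩, Or.inr rfl⟩

/-- For an `Aut(F)`-invariant proper subfield `K ⊊ F`, a subset of `F ∪ {∞}` is a
`K`-chain containing `∞` if and only if it is a projective affine line, i.e. of the
form `(Ka + b) ∪ {∞}` with `a ≠ 0` (viewing `F` as a `K`-vector space). -/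
theorem kChain_with_infty_iff_projective_affine_line {F : Type*} [Field F]
    (K : Subfield F) (hK : K ≠ ⊤)
    (hInv : ∀ σ : F ≃+* F, ∀ x ∈ K, σ x ∈ K)
    (X : Set (Option F)) :
    (IsKChain K X ∧ none ∈ X) ↔
      ∃ a b : F, a ≠ 0 ∧
        X = some '' ((fun k : F => k * a + b) '' (K : Set F)) ∪ {none} :=
  kChain_with_infty_iff_projective_affine_line_general K hInv X
end

section
/- Let F be a field and let f : F → F be an additive bijection with f(0) = 0 and f(1) = 1 satisfying f(ab/(a+b)) = f(a)f(b)/(f(a)+f(b)) for all nonzero a,b ∈ F with a + b ≠ 0 and f(a)+f(b) ≠ 0. Then f(t)·f(t⁻¹) = 1 for all nonzero t ∈ F, and f(a²) = f(a)² for all a ∈ F. -/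
/-- Let `f : F → F` be an additive bijection with `f 0 = 0`, `f 1 = 1` satisfying
`f (ab/(a+b)) = f(a)f(b)/(f(a)+f(b))` whenever all terms make sense.  Then
`f(t) f(t⁻¹) = 1` for all nonzero `t`, and `f(a²) = f(a)²` for all `a`. -/
theorem inv_and_sq_of_additive_harmonic {F : Type*} [Field F] (f : F → F)
    (hbij : Function.Bijective f)
    (hadd : ∀ x y : F, f (x + y) = f x + f y)
    (h0 : f 0 = 0) (h1 : f 1 = 1)
    (hharm : ∀ a b : F, a ≠ 0 → b ≠ 0 → a + b ≠ 0 → f a + f b ≠ 0 →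
      f (a * b / (a + b)) = f a * f b / (f a + f b)) :
    (∀ t : F, t ≠ 0 → f t * f t⁻¹ = 1) ∧ (∀ a : F, f (a ^ 2) = (f a) ^ 2) := by
  have hne : ∀ a : F, a ≠ 0 → f a ≠ 0 := by
    intro a ha h
    exact ha (hbij.injective (h.trans h0.symm))
  have hneg : f (-1 : F) = -1 := by
    have h := hadd (-1) 1
    rw [neg_add_cancel, h0, h1] at h
    linear_combination -h
  -- Part 1
  have part1 : ∀ t : F, t ≠ 0 → f t * f t⁻¹ = 1 := by
    intro t ht
    by_cases ht1 : t = -1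
    · subst ht1
      rw [show ((-1 : F)⁻¹) = -1 by norm_num, hneg]; ring
    · have h1' : t + 1 ≠ 0 := by
        intro h; exact ht1 (by linear_combination h)
      have hb : (t + 1) / t ≠ 0 := div_ne_zero h1' ht
      have hs : (t + 1) + (t + 1) / t ≠ 0 := by
        rw [show (t + 1) + (t + 1) / t = (t + 1) ^ 2 / t by field_simp]
        exact div_ne_zero (pow_ne_zero 2 h1') ht
      have hfs : f (t + 1) + f ((t + 1) / t) ≠ 0 := by
        rw [← hadd]; exact hne _ hs
      have key := hharm (t + 1) ((t + 1) / t) h1' hb hs hfs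
      have harg : (t + 1) * ((t + 1) / t) / ((t + 1) + (t + 1) / t) = 1 := by
        rw [div_eq_one_iff_eq hs]
        field_simp
      rw [harg, h1] at key
      have e1 : f (t + 1) = f t + 1 := by rw [hadd, h1]
      have e2 : f ((t + 1) / t) = 1 + f t⁻¹ := by
        rw [show (t + 1) / t = 1 + t⁻¹ by field_simp, hadd, h1]
      rw [e1, e2] at key hfs
      rw [eq_div_iff hfs] at key
      linear_combination -key
  refine ⟨part1, ?_⟩
  -- Part 2
  intro a
  by_cases ha0 : a = 0
  · simp [ha0, h0]
  by_cases ha1 : a = -1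
  · subst ha1
    rw [show ((-1 : F) ^ 2) = 1 by ring, h1, hneg]; ring
  have ha1' : a + 1 ≠ 0 := by
    intro h; exact ha1 (by linear_combination h)
  have hu : f a ≠ 0 := hne a ha0
  have hu1 : f (a + 1) = f a + 1 := by rw [hadd, h1]
  have hu1' : f a + 1 ≠ 0 := by rw [← hu1]; exact hne _ ha1'
  have hsub : ∀ x y : F, f (x - y) = f x - f y := by
    intro x y
    have := hadd (x - y) y
    rw [sub_add_cancel] at this
    linear_combination -this
  have hinv : ∀ t : F, t ≠ 0 → f t⁻¹ = (f t)⁻¹ := by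
    intro t ht
    exact eq_inv_of_mul_eq_one_right (part1 t ht)
  have haa : a ^ 2 + a ≠ 0 := by
    intro h
    rcases mul_eq_zero.1 (by linear_combination h : a * (a + 1) = 0) with h' | h' <;>
      [exact ha0 h'; exact ha1' h']
  have hx : a⁻¹ - (a + 1)⁻¹ = (a ^ 2 + a)⁻¹ := by
    field_simp
    ring
  have hden : (f a) ^ 2 + f a ≠ 0 := by
    intro h
    rcases mul_eq_zero.1 (by linear_combination h : f a * (f a + 1) = 0) with h' | h' <;>
      [exact hu h'; exact hu1' h']
  have hfx : f ((a ^ 2 + a)⁻¹) = ((f a) ^ 2 + f a)⁻¹ := by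
    rw [← hx, hsub, hinv a ha0, hinv (a + 1) ha1', hu1]
    field_simp
    ring
  have hkey := part1 (a ^ 2 + a) haa
  rw [hfx, hadd] at hkey
  field_simp at hkey
  linear_combination hkey
end

section
/- Let F be a field and let f : F → F be an additive bijection with f(0) = 0 and f(1) = 1 satisfying f(ab/(a+b)) = f(a)f(b)/(f(a)+f(b)) for all nonzero a,b ∈ F with a + b ≠ 0 and f(a)+f(b) ≠ 0. Then f is multiplicative, i.e. f is a field automorphism of F. -/
/-!
The harmonic-mean condition says exactly that `g x := (f x⁻¹)⁻¹` is additive, so `f` and `g`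
are additive maps with `f x⁻¹ = (g x)⁻¹`. Pushing Hua's identity
`a - (a⁻¹ + (b⁻¹ - a)⁻¹)⁻¹ = a²b` through this relation gives `f (a²b) = (f a)² g b`;
taking `a = 1` shows `f = g`, so `f (a²b) = (f a)² f b`. Then `f (ab)² = ((f a)(f b))²`, while
polarising `f (x²) = (f x)²` gives `2 f (ab) = 2 (f a)(f b)`; together these force
`f (ab) = (f a)(f b)` in every characteristic.
-/

open Function

theorem eq_of_sq_eq_of_two_mul_eq {R : Type*} [CommRing R] [IsReduced R] {m n : R}
    (hsq : m ^ 2 = n ^ 2) (htwo : 2 * m = 2 * n) : m = n := by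
  have hnil : (m - n) ^ 2 = 0 := by linear_combination hsq - n * htwo
  exact sub_eq_zero.mp (IsNilpotent.eq_zero ⟨2, hnil⟩)

theorem AddMonoidHom.map_mul_of_map_sq_mul {R S : Type*} [CommRing R] [CommRing S] [IsReduced S]
    (f : R →+ S) (h1 : f 1 = 1) (hsq_mul : ∀ a b, f (a ^ 2 * b) = f a ^ 2 * f b) (a b : R) :
    f (a * b) = f a * f b := by
  have hsq : ∀ x, f (x ^ 2) = f x ^ 2 := fun x => by simpa [h1] using hsq_mul x 1
  refine eq_of_sq_eq_of_two_mul_eq ?_ ?_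
  · calc f (a * b) ^ 2 = f (a ^ 2 * b ^ 2) := by rw [← hsq, mul_pow]
      _ = (f a * f b) ^ 2 := by rw [hsq_mul, hsq, mul_pow]
  · have hpol := hsq (a + b)
    rw [add_sq, map_add, map_add, hsq, hsq, map_add, mul_assoc, two_mul (a * b), map_add] at hpol
    linear_combination hpol

section Field

variable {F K : Type*} [Field F] [Field K]

theorem hua_identity {a b : K} (ha : a ≠ 0) (hb : b ≠ 0) (hab : b⁻¹ - a ≠ 0) :
    a - (a⁻¹ + (b⁻¹ - a)⁻¹)⁻¹ = a ^ 2 * b := by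
  have hab' : 1 - a * b ≠ 0 := fun h => hab (by field_simp; linear_combination h)
  field_simp
  ring

theorem AddMonoidHom.inv_map_inv_add_of_map_harmonic (f : F →+ K) (hf : Injective f)
    (hharm : ∀ a b : F, a ≠ 0 → b ≠ 0 → a + b ≠ 0 → f a + f b ≠ 0 →
      f (a * b / (a + b)) = f a * f b / (f a + f b)) (x y : F) :
    (f (x + y)⁻¹)⁻¹ = (f x⁻¹)⁻¹ + (f y⁻¹)⁻¹ := by
  rcases eq_or_ne x 0 with rfl | hx
  · simp
  rcases eq_or_ne y 0 with rfl | hy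
  · simp
  rcases eq_or_ne (x + y) 0 with hxy | hxy
  · rw [eq_neg_of_add_eq_zero_right hxy]
    simp
  have hsum : x⁻¹ + y⁻¹ ≠ 0 := by
    rw [inv_add_inv hx hy]
    exact div_ne_zero hxy (mul_ne_zero hx hy)
  have hfsum : f x⁻¹ + f y⁻¹ ≠ 0 := by
    rw [← map_add]
    exact (map_ne_zero_iff f hf).mpr hsum
  have harg : x⁻¹ * y⁻¹ / (x⁻¹ + y⁻¹) = (x + y)⁻¹ := by
    rw [inv_add_inv hx hy]
    field_simp
  rw [← harg, hharm _ _ (inv_ne_zero hx) (inv_ne_zero hy) hsum hfsum, inv_div,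
    inv_add_inv ((map_ne_zero_iff f hf).mpr (inv_ne_zero hx))
      ((map_ne_zero_iff f hf).mpr (inv_ne_zero hy))]

theorem AddMonoidHom.map_sq_mul_of_map_inv_eq_inv (f g : F →+ K) (hf : Injective f)
    (hfg : ∀ x, f x⁻¹ = (g x)⁻¹) (a b : F) : f (a ^ 2 * b) = f a ^ 2 * g b := by
  have hgf : ∀ x, g x⁻¹ = (f x)⁻¹ := fun x => by rw [← inv_inv (g x⁻¹), ← hfg, inv_inv]
  have hf0 : ∀ {x}, x ≠ 0 → f x ≠ 0 := (map_ne_zero_iff f hf).mpr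
  rcases eq_or_ne a 0 with rfl | ha
  · simp
  rcases eq_or_ne b 0 with rfl | hb
  · simp
  have hgb : g b ≠ 0 := fun h => hf0 (inv_ne_zero hb) (by rw [hfg, h, inv_zero])
  rcases eq_or_ne (b⁻¹ - a) 0 with hab | hab
  · have hb_inv : b⁻¹ ^ 2 * b = b⁻¹ := by field_simp
    rw [← sub_eq_zero.mp hab, hb_inv, hfg]
    field_simp
  have hfab : f (b⁻¹ - a) = (g b)⁻¹ - f a := by rw [map_sub, hfg]
  calc f (a ^ 2 * b) = f (a - (a⁻¹ + (b⁻¹ - a)⁻¹)⁻¹) := by rw [hua_identity ha hb hab]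
    _ = f a - ((f a)⁻¹ + ((g b)⁻¹ - f a)⁻¹)⁻¹ := by rw [map_sub, hfg, map_add, hgf, hgf, hfab]
    _ = f a ^ 2 * g b := hua_identity (hf0 ha) hgb (hfab ▸ hf0 hab)

theorem AddMonoidHom.map_mul_of_map_inv_eq_inv (f g : F →+ K) (hf : Injective f) (h1 : f 1 = 1)
    (hfg : ∀ x, f x⁻¹ = (g x)⁻¹) (a b : F) : f (a * b) = f a * f b := by
  have hf_eq_g : ∀ x, f x = g x := fun x => by
    simpa [h1] using f.map_sq_mul_of_map_inv_eq_inv g hf hfg 1 x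
  refine f.map_mul_of_map_sq_mul h1 (fun x y => ?_) a b
  rw [f.map_sq_mul_of_map_inv_eq_inv g hf hfg, hf_eq_g y]

end Field

theorem mul_of_additive_harmonic_general {F : Type*} [Field F] (f : F → F)
    (hbij : Function.Bijective f)
    (hadd : ∀ x y : F, f (x + y) = f x + f y)
    (h1 : f 1 = 1)
    (hharm : ∀ a b : F, a ≠ 0 → b ≠ 0 → a + b ≠ 0 → f a + f b ≠ 0 →
      f (a * b / (a + b)) = f a * f b / (f a + f b)) :
    ∀ a b : F, f (a * b) = f a * f b := by
  let φ : F →+ F := AddMonoidHom.mk' f hadd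
  let g : F →+ F :=
    AddMonoidHom.mk' (fun x => (φ x⁻¹)⁻¹) (φ.inv_map_inv_add_of_map_harmonic hbij.1 hharm)
  exact φ.map_mul_of_map_inv_eq_inv g hbij.1 h1 fun x => (inv_inv _).symm

/-- Let `f : F → F` be an additive bijection with `f 0 = 0`, `f 1 = 1` satisfying
`f (ab/(a+b)) = f(a)f(b)/(f(a)+f(b))` whenever all terms make sense.  Then `f` is
multiplicative, i.e. `f` is a field automorphism of `F`. -/
theorem mul_of_additive_harmonic {F : Type*} [Field F] (f : F → F)
    (hbij : Function.Bijective f)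
    (hadd : ∀ x y : F, f (x + y) = f x + f y)
    (h0 : f 0 = 0) (h1 : f 1 = 1)
    (hharm : ∀ a b : F, a ≠ 0 → b ≠ 0 → a + b ≠ 0 → f a + f b ≠ 0 →
      f (a * b / (a + b)) = f a * f b / (f a + f b)) :
    ∀ a b : F, f (a * b) = f a * f b :=
  mul_of_additive_harmonic_general f hbij hadd h1 hharm
end
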